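/- Let g ≥ 1 and D ≥ 2 be integers, 0 < x_0 < 1, 0 < δ < 1 with x_0 < 1 - δ, 0 < R, and let P(x) = Σ_{i=2}^{D} p_i x^i with p_i ≥ 0 and Σ_{i=2}^{D} p_i = 1. Let r_0 ≥ 0 be the unique real with Γ_g(r_0) = (g-1)!·(1 - x_0), and define f(x) = 1 - Γ_g(r_0 + g(1-R)·P'(x))/(g-1)!. Assume R < 1 and that x < f(x) for all x ∈ (x_0, 1-δ). Then the iterates u_0 = x_0, u_{k+1} = f(u_k) form a monotone nondecreasing sequence in [x_0, 1) that converges to a limit L with L ≥ 1 - δ. -/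

import Mathlib

/-- `Gam g x = (g-1)! · e^{-x} · Σ_{i=0}^{g} x^i/i!`. -/
noncomputable def Gam (α : ℕ) (x : ℝ) : ℝ :=
  (Nat.factorial (α - 1) : ℝ) * Real.exp (-x) *
    ∑ i ∈ Finset.range (α + 1), x ^ i / (Nat.factorial i : ℝ)

/-! Γ_g is strictly decreasing on `[0, ∞)` and `P'` is nondecreasing and nonnegative there, so `f`
is continuous, nondecreasing on `[0, ∞)` and below `1`; moreover `f x₀ > x₀` because `P' x₀ > 0`
and `Γ_g(r₀) = (g-1)!(1-x₀)`. Hence the orbit of `x₀` increases, stays in `[x₀, 1)` and converges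
to a fixed point `L > x₀` of `f`. As `x < f x` on `(x₀, 1-δ)`, `L` cannot lie there, so `L ≥ 1-δ`. -/

open Set Filter Topology Finset Function

open scoped Nat

theorem hasDerivAt_sum_range_pow_div_factorial (n : ℕ) (x : ℝ) :
    HasDerivAt (fun y : ℝ => ∑ i ∈ range (n + 1), y ^ i / (i ! : ℝ))
      (∑ i ∈ range n, x ^ i / (i ! : ℝ)) x := by
  induction n with
  | zero => simpa using hasDerivAt_const x (1 : ℝ)
  | succ n ih =>
    have h := (hasDerivAt_pow (n + 1) x).div_const ((n + 1)! : ℝ)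
    simp_rw [sum_range_succ _ (n + 1)]
    rw [sum_range_succ]
    refine (ih.add h).congr_deriv ?_
    rw [Nat.factorial_succ]
    push_cast
    field_simp

theorem hasDerivAt_exp_neg_mul_sum_range_pow_div_factorial (n : ℕ) (x : ℝ) :
    HasDerivAt (fun y : ℝ => Real.exp (-y) * ∑ i ∈ range (n + 1), y ^ i / (i ! : ℝ))
      (-(Real.exp (-x) * (x ^ n / n !))) x := by
  refine ((hasDerivAt_neg x).exp.mul (hasDerivAt_sum_range_pow_div_factorial n x)).congr_deriv ?_
  rw [sum_range_succ]
  ring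

theorem hasDerivAt_Gam (g : ℕ) (x : ℝ) :
    HasDerivAt (Gam g) (-(((g - 1)! : ℝ) * Real.exp (-x) * (x ^ g / g !))) x := by
  have h := (hasDerivAt_exp_neg_mul_sum_range_pow_div_factorial g x).const_mul ((g - 1)! : ℝ)
  rw [mul_neg, ← mul_assoc] at h
  have hGam : Gam g = fun y : ℝ =>
      ((g - 1)! : ℝ) * (Real.exp (-y) * ∑ i ∈ range (g + 1), y ^ i / (i ! : ℝ)) :=
    funext fun y => by rw [Gam, mul_assoc]
  rwa [hGam]

theorem continuous_Gam (g : ℕ) : Continuous (Gam g) :=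
  continuous_iff_continuousAt.2 fun x => (hasDerivAt_Gam g x).continuousAt

theorem strictAntiOn_Gam (g : ℕ) : StrictAntiOn (Gam g) (Ici 0) := by
  refine strictAntiOn_of_hasDerivWithinAt_neg (convex_Ici 0) (continuous_Gam g).continuousOn
    (fun x _ => (hasDerivAt_Gam g x).hasDerivWithinAt) fun x hx => ?_
  rw [interior_Ici, Set.mem_Ioi] at hx
  have := Real.exp_pos (-x)
  rw [neg_lt_zero]
  positivity

theorem Gam_pos (g : ℕ) {x : ℝ} (hx : 0 ≤ x) : 0 < Gam g x := by
  have : 0 < ∑ i ∈ range (g + 1), x ^ i / (i ! : ℝ) :=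
    sum_pos' (fun i _ => by positivity) ⟨0, mem_range.2 g.succ_pos, by simp⟩
  have := Real.exp_pos (-x)
  unfold Gam
  positivity

theorem strictMonoOn_one_sub_Gam_div_factorial (g : ℕ) :
    StrictMonoOn (fun y => 1 - Gam g y / ((g - 1)! : ℝ)) (Ici 0) := fun _ hy _ hz hyz =>
  sub_lt_sub_left (div_lt_div_of_pos_right (strictAntiOn_Gam g hy hz hyz) (by positivity)) 1

theorem one_sub_Gam_div_factorial_lt_one (g : ℕ) {y : ℝ} (hy : 0 ≤ y) :
    1 - Gam g y / ((g - 1)! : ℝ) < 1 :=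
  sub_lt_self 1 (div_pos (Gam_pos g hy) (by positivity))

section NonnegCoeffs

variable {ι : Type*} {s : Finset ι} {a : ι → ℝ} {e : ι → ℕ}

theorem monotoneOn_sum_mul_pow (ha : ∀ i ∈ s, 0 ≤ a i) :
    MonotoneOn (fun x : ℝ => ∑ i ∈ s, a i * x ^ e i) (Ici 0) := fun _ hx _ _ hxy =>
  sum_le_sum fun i hi => mul_le_mul_of_nonneg_left (pow_le_pow_left₀ hx hxy _) (ha i hi)

theorem sum_mul_pow_nonneg (ha : ∀ i ∈ s, 0 ≤ a i) {x : ℝ} (hx : 0 ≤ x) :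
    0 ≤ ∑ i ∈ s, a i * x ^ e i :=
  sum_nonneg fun i hi => mul_nonneg (ha i hi) (pow_nonneg hx _)

theorem sum_mul_pow_pos (ha : ∀ i ∈ s, 0 ≤ a i) {j : ι} (hj : j ∈ s) (haj : 0 < a j) {x : ℝ}
    (hx : 0 < x) : 0 < ∑ i ∈ s, a i * x ^ e i :=
  sum_pos' (fun i hi => mul_nonneg (ha i hi) (pow_nonneg hx.le _)) ⟨j, hj, by positivity⟩

end NonnegCoeffs

theorem monotone_iterate_of_monotoneOn {α : Type*} [Preorder α] {f : α → α} {s : Set α} {x : α}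
    (hf : MonotoneOn f s) (hs : MapsTo f s s) (hx : x ∈ s) (hxf : x ≤ f x) :
    Monotone fun n => f^[n] x := by
  refine monotone_nat_of_le_succ fun n => ?_
  induction n with
  | zero => exact hxf
  | succ n ih =>
    rw [iterate_succ_apply' f n, iterate_succ_apply' f (n + 1)]
    exact hf (hs.iterate n hx) (hs.iterate (n + 1) hx) ih

theorem exists_tendsto_iterate_of_monotoneOn_Ico {f : ℝ → ℝ} {a b c : ℝ} (hf : Continuous f)
    (hmono : MonotoneOn f (Ico a b)) (hmaps : MapsTo f (Ico a b) (Ico a b)) (hab : a < b)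
    (ha : a < f a) (hlt : ∀ x ∈ Ioo a c, x < f x) :
    Monotone (fun n => f^[n] a) ∧ (∀ n, f^[n] a ∈ Ico a b) ∧
      ∃ L, Tendsto (fun n => f^[n] a) atTop (𝓝 L) ∧ c ≤ L := by
  have ha_mem : a ∈ Ico a b := ⟨le_rfl, hab⟩
  have hu_mono := monotone_iterate_of_monotoneOn hmono hmaps ha_mem ha.le
  have hu_mem n : f^[n] a ∈ Ico a b := hmaps.iterate n ha_mem
  have hbdd : BddAbove (range fun n => f^[n] a) :=
    ⟨b, forall_mem_range.2 fun n => (hu_mem n).2.le⟩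
  have hlim := tendsto_atTop_ciSup hu_mono hbdd
  refine ⟨hu_mono, hu_mem, _, hlim, ?_⟩
  set L := ⨆ n, f^[n] a
  have hfix : f L = L := isFixedPt_of_tendsto_iterate hlim hf.continuousAt
  have haL : a < L := ha.trans_le (hu_mono.ge_of_tendsto hlim 1)
  by_contra! hLc
  exact (hlt L ⟨haL, hLc⟩).ne' hfix

theorem exists_tendsto_iterate_one_sub_Gam_comp {g : ℕ} {Q f : ℝ → ℝ} {x0 b c r0 : ℝ}
    (hQ_cont : Continuous Q) (hQ_mono : MonotoneOn Q (Ici 0))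
    (hQ_nonneg : MapsTo Q (Ici 0) (Ici 0))
    (hQ_pos : 0 < Q x0) (hc : 0 < c) (hr0 : 0 ≤ r0) (hx0 : 0 ≤ x0) (hx01 : x0 < 1)
    (hr0eq : Gam g r0 = ((g - 1)! : ℝ) * (1 - x0))
    (hf : ∀ x, f x = 1 - Gam g (r0 + c * Q x) / ((g - 1)! : ℝ))
    (hlt : ∀ x ∈ Ioo x0 b, x < f x) :
    Monotone (fun n => f^[n] x0) ∧ (∀ n, f^[n] x0 ∈ Ico x0 1) ∧
      ∃ L, Tendsto (fun n => f^[n] x0) atTop (𝓝 L) ∧ b ≤ L := by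
  set ρ := fun x => r0 + c * Q x
  have hf_eq : f = (fun y => 1 - Gam g y / ((g - 1)! : ℝ)) ∘ ρ := funext hf
  have hρ_maps : MapsTo ρ (Ici 0) (Ici 0) := fun x hx =>
    add_nonneg hr0 (mul_nonneg hc.le (hQ_nonneg hx))
  have hρ_mono : MonotoneOn ρ (Ici 0) := fun x hx y hy hxy =>
    add_le_add_right (mul_le_mul_of_nonneg_left (hQ_mono hx hy hxy) hc.le) r0
  have hx0_lt : x0 < f x0 :=
    calc x0 = 1 - Gam g r0 / ((g - 1)! : ℝ) := by
          rw [hr0eq, mul_div_cancel_left₀ _ (by positivity)]; ring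
      _ < f x0 := hf x0 ▸ strictMonoOn_one_sub_Gam_div_factorial g hr0 (hρ_maps hx0)
          (lt_add_of_pos_right r0 (mul_pos hc hQ_pos))
  have hf_mono : MonotoneOn f (Ici 0) :=
    hf_eq ▸ (strictMonoOn_one_sub_Gam_div_factorial g).monotoneOn.comp hρ_mono hρ_maps
  have hf_cont : Continuous f :=
    hf_eq ▸ (continuous_const.sub ((continuous_Gam g).div_const _)).comp
      (continuous_const.add (continuous_const.mul hQ_cont))
  have hf_maps : MapsTo f (Ico x0 1) (Ico x0 1) := fun x hx =>
    ⟨hx0_lt.le.trans (hf_mono hx0 (hx0.trans hx.1) hx.1),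
      hf x ▸ one_sub_Gam_div_factorial_lt_one g (hρ_maps (hx0.trans hx.1))⟩
  exact exists_tendsto_iterate_of_monotoneOn_Ico hf_cont
    (hf_mono.mono fun x hx => hx0.trans hx.1) hf_maps hx01 hx0_lt hlt

theorem stmt_10_general (g : ℕ) (hg : 1 ≤ g) (D : ℕ)
    (x0 δ R : ℝ) (hx00 : 0 < x0) (hx01 : x0 < 1)
    (hR1 : R < 1)
    (p : ℕ → ℝ) (hp : ∀ i, 0 ≤ p i) (hsum : ∑ i ∈ Finset.Icc 2 D, p i = 1)
    (P' : ℝ → ℝ) (hP' : ∀ x : ℝ, P' x = ∑ i ∈ Finset.Icc 2 D, (i : ℝ) * p i * x ^ (i - 1))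
    (r0 : ℝ) (hr0 : 0 ≤ r0)
    (hr0eq : Gam g r0 = (Nat.factorial (g - 1) : ℝ) * (1 - x0))
    (f : ℝ → ℝ)
    (hf : ∀ x : ℝ,
      f x = 1 - Gam g (r0 + (g : ℝ) * (1 - R) * P' x) / (Nat.factorial (g - 1) : ℝ))
    (hlt : ∀ x ∈ Set.Ioo x0 (1 - δ), x < f x)
    (u : ℕ → ℝ) (hu0 : u 0 = x0) (hu : ∀ k, u (k + 1) = f (u k)) :
    Monotone u ∧ (∀ k, u k ∈ Set.Ico x0 1) ∧
    ∃ L : ℝ, Filter.Tendsto u Filter.atTop (nhds L) ∧ 1 - δ ≤ L := by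
  obtain rfl : u = fun n => f^[n] x0 := funext fun n => by
    induction n with
    | zero => exact hu0
    | succ n ih => rw [hu, ih, iterate_succ_apply']
  have hP'_eq : P' = fun x => ∑ i ∈ Finset.Icc 2 D, (i : ℝ) * p i * x ^ (i - 1) := funext hP'
  have hcoeff : ∀ i ∈ Finset.Icc 2 D, 0 ≤ (i : ℝ) * p i := fun i _ => by positivity [hp i]
  have hP'_pos : 0 < P' x0 := by
    obtain ⟨j, hj, hpj⟩ :=
      exists_lt_of_sum_lt (s := Finset.Icc 2 D) (f := 0) (g := p) (by simp [hsum])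
    have hj0 : (0 : ℝ) < j := by have := (Finset.mem_Icc.1 hj).1; positivity
    exact hP' x0 ▸ sum_mul_pow_pos hcoeff hj (mul_pos hj0 hpj) hx00
  exact exists_tendsto_iterate_one_sub_Gam_comp (hP'_eq ▸ by fun_prop)
    (hP'_eq ▸ monotoneOn_sum_mul_pow hcoeff) (fun x hx => hP' x ▸ sum_mul_pow_nonneg hcoeff hx)
    hP'_pos (mul_pos (by exact_mod_cast hg) (sub_pos.2 hR1)) hr0 hx00.le hx01 hr0eq hf hlt

/-- Density-evolution content of Theorem 1: with `Γ_g(r_0) = (g-1)!(1-x_0)`,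
`f(x) = 1 - Γ_g(r_0 + g(1-R)P'(x))/(g-1)!`, `R < 1`, and `x < f(x)` on `(x_0, 1-δ)`, the
iterates `u_0 = x_0`, `u_{k+1} = f(u_k)` form a monotone nondecreasing sequence in
`[x_0, 1)` converging to a limit `L ≥ 1 - δ`. -/
theorem stmt_10 (g : ℕ) (hg : 1 ≤ g) (D : ℕ) (hD : 2 ≤ D)
    (x0 δ R : ℝ) (hx00 : 0 < x0) (hx01 : x0 < 1) (hδ0 : 0 < δ) (hδ1 : δ < 1)
    (hx0δ : x0 < 1 - δ) (hR0 : 0 < R) (hR1 : R < 1)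
    (p : ℕ → ℝ) (hp : ∀ i, 0 ≤ p i) (hsum : ∑ i ∈ Finset.Icc 2 D, p i = 1)
    (P' : ℝ → ℝ) (hP' : ∀ x : ℝ, P' x = ∑ i ∈ Finset.Icc 2 D, (i : ℝ) * p i * x ^ (i - 1))
    (r0 : ℝ) (hr0 : 0 ≤ r0)
    (hr0eq : Gam g r0 = (Nat.factorial (g - 1) : ℝ) * (1 - x0))
    (f : ℝ → ℝ)
    (hf : ∀ x : ℝ,
      f x = 1 - Gam g (r0 + (g : ℝ) * (1 - R) * P' x) / (Nat.factorial (g - 1) : ℝ))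
    (hlt : ∀ x ∈ Set.Ioo x0 (1 - δ), x < f x)
    (u : ℕ → ℝ) (hu0 : u 0 = x0) (hu : ∀ k, u (k + 1) = f (u k)) :
    Monotone u ∧ (∀ k, u k ∈ Set.Ico x0 1) ∧
    ∃ L : ℝ, Filter.Tendsto u Filter.atTop (nhds L) ∧ 1 - δ ≤ L :=
  stmt_10_general g hg D x0 δ R hx00 hx01 hR1 p hp hsum P' hP' r0 hr0 hr0eq f hf hlt u hu0 hu
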